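/- arXiv:2511.21455 — 3 statements merged into one kernel-verified Lean document; each statement's English description precedes it below -/
import Mathlib

section
/- For all complex numbers z, w, the limit as n → ∞ of (1/n) Σ_{k=0}^n ((1 + z/n)(1 + w̄/n))^k equals ∫₀¹ e^{t(z + w̄)} dt. -/
/-!
If `n (aₙ - 1) → c` then `aₙ ^ (n + 1) → exp c`. For `c ≠ 0` the geometric sum
`(1/n) ∑_{k ≤ n} aₙ ^ k = (aₙ ^ (n + 1) - 1) / (n (aₙ - 1))` therefore tends to
`(exp c - 1) / c = ∫₀¹ exp (t c) dt`. For `c = 0` the bound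
`‖a ^ k - 1‖ ≤ (1 + ‖a - 1‖) ^ k - 1` makes every `aₙ ^ k` with `k ≤ n` uniformly close
to `1`, so the average tends to `1`. The theorem is the case `aₙ = (1 + z/n)(1 + w̄/n)`, for which
`n (aₙ - 1) = z + w̄ + z w̄ / n`.
-/

open Finset Filter Complex Topology

theorem norm_pow_sub_one_le {R : Type*} [NormedRing R] [NormOneClass R] (a : R) (k : ℕ) :
    ‖a ^ k - 1‖ ≤ (1 + ‖a - 1‖) ^ k - 1 := by
  induction k with
  | zero => simp
  | succ k ih =>
    have ha : ‖a‖ ≤ 1 + ‖a - 1‖ := by simpa using norm_add_le 1 (a - 1)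
    calc ‖a ^ (k + 1) - 1‖
        = ‖a * (a ^ k - 1) + (a - 1)‖ := by rw [pow_succ', mul_sub, mul_one, sub_add_sub_cancel]
      _ ≤ ‖a‖ * ‖a ^ k - 1‖ + ‖a - 1‖ :=
          (norm_add_le _ _).trans (by gcongr; exact norm_mul_le _ _)
      _ ≤ (1 + ‖a - 1‖) * ((1 + ‖a - 1‖) ^ k - 1) + ‖a - 1‖ := by gcongr
      _ = (1 + ‖a - 1‖) ^ (k + 1) - 1 := by ring

section
variable {a : ℕ → ℂ} {c : ℂ}

theorem tendsto_sub_one_of_tendsto_natCast_mul_sub_one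
    (h : Tendsto (fun n : ℕ => (n : ℂ) * (a n - 1)) atTop (𝓝 c)) :
    Tendsto (fun n => a n - 1) atTop (𝓝 0) := by
  have := (tendsto_inv_atTop_nhds_zero_nat (𝕜 := ℂ)).mul h
  rw [zero_mul] at this
  refine this.congr' ?_
  filter_upwards [eventually_ne_atTop 0] with n hn
  rw [inv_mul_cancel_left₀ (Nat.cast_ne_zero.mpr hn)]

theorem tendsto_pow_succ_of_tendsto_natCast_mul_sub_one
    (h : Tendsto (fun n : ℕ => (n : ℂ) * (a n - 1)) atTop (𝓝 c)) :
    Tendsto (fun n => a n ^ (n + 1)) atTop (𝓝 (exp c)) := by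
  have hpow : Tendsto (fun n => a n ^ n) atTop (𝓝 (exp c)) := by
    simpa using tendsto_one_add_pow_exp_of_tendsto h
  have ha : Tendsto a atTop (𝓝 1) := by
    simpa using (tendsto_sub_one_of_tendsto_natCast_mul_sub_one h).add_const 1
  simpa [pow_succ] using hpow.mul ha

theorem tendsto_one_div_mul_geom_sum_of_ne_zero (hc : c ≠ 0)
    (h : Tendsto (fun n : ℕ => (n : ℂ) * (a n - 1)) atTop (𝓝 c)) :
    Tendsto (fun n : ℕ => (1 / (n : ℂ)) * ∑ k ∈ range (n + 1), a n ^ k) atTop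
      (𝓝 ((exp c - 1) / c)) := by
  have hpow := tendsto_pow_succ_of_tendsto_natCast_mul_sub_one h
  refine ((hpow.sub_const 1).div h hc).congr' ?_
  filter_upwards [h.eventually_ne hc] with n hn
  have ha : a n ≠ 1 := fun ha => hn (by simp [ha])
  have hn0 : (n : ℂ) ≠ 0 := left_ne_zero_of_mul hn
  simp only [Pi.div_apply, geom_sum_eq ha]
  field_simp

theorem tendsto_one_div_mul_geom_sum_of_zero
    (h : Tendsto (fun n : ℕ => (n : ℂ) * (a n - 1)) atTop (𝓝 0)) :
    Tendsto (fun n : ℕ => (1 / (n : ℂ)) * ∑ k ∈ range (n + 1), a n ^ k) atTop (𝓝 1) := by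
  have hbound : Tendsto (fun n : ℕ => (1 + 1 / (n : ℝ)) * ((1 + ‖a n - 1‖) ^ n - 1)) atTop
      (𝓝 0) := by
    have hexp := Real.tendsto_one_add_pow_exp_of_tendsto (g := fun n => ‖a n - 1‖) (t := 0)
      (by simpa using h.norm)
    simpa using
      ((tendsto_one_div_atTop_nhds_zero_nat (𝕜 := ℝ)).const_add 1).mul (hexp.sub_const 1)
  have hdiff : Tendsto (fun n : ℕ => (1 / (n : ℂ)) * ∑ k ∈ range (n + 1), (a n ^ k - 1)) atTop
      (𝓝 0) := by
    refine squeeze_zero_norm (fun n => ?_) hbound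
    set x := ‖a n - 1‖
    have hx : 1 ≤ 1 + x := le_add_of_nonneg_right (norm_nonneg _)
    calc ‖(1 / (n : ℂ)) * ∑ k ∈ range (n + 1), (a n ^ k - 1)‖
        ≤ 1 / n * ∑ k ∈ range (n + 1), ((1 + x) ^ k - 1) := by
          rw [norm_mul, norm_div, norm_one, Complex.norm_natCast]
          gcongr
          exact (norm_sum_le _ _).trans (sum_le_sum fun k _ => norm_pow_sub_one_le _ _)
      _ ≤ 1 / n * ∑ k ∈ range (n + 1), ((1 + x) ^ n - 1) := by
          gcongr with k hk
          exact Nat.lt_succ_iff.mp (mem_range.mp hk)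
      _ = (1 + 1 / (n : ℝ)) * ((1 + x) ^ n - 1) := by
          rcases eq_or_ne n 0 with rfl | hn
          · simp
          · rw [sum_const, card_range, nsmul_eq_mul]
            push_cast
            field_simp
  have hone : Tendsto (fun n : ℕ => 1 + 1 / (n : ℂ)) atTop (𝓝 1) := by
    simpa using (tendsto_one_div_atTop_nhds_zero_nat (𝕜 := ℂ)).const_add 1
  refine (add_zero (1 : ℂ) ▸ hone.add hdiff).congr' ?_
  filter_upwards [eventually_ne_atTop 0] with n hn
  rw [sum_sub_distrib, sum_const, card_range, nsmul_eq_mul, mul_one]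
  push_cast
  field_simp
  ring

theorem tendsto_one_div_mul_geom_sum
    (h : Tendsto (fun n : ℕ => (n : ℂ) * (a n - 1)) atTop (𝓝 c)) :
    Tendsto (fun n : ℕ => (1 / (n : ℂ)) * ∑ k ∈ range (n + 1), a n ^ k) atTop
      (𝓝 (∫ t in (0:ℝ)..1, exp (t * c))) := by
  rcases eq_or_ne c 0 with rfl | hc
  · simpa using tendsto_one_div_mul_geom_sum_of_zero h
  · have hint : ∫ t in (0:ℝ)..1, exp (t * c) = (exp c - 1) / c := by
      simp_rw [mul_comm _ c]
      simpa using integral_exp_mul_complex hc (a := 0) (b := 1)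
    exact hint ▸ tendsto_one_div_mul_geom_sum_of_ne_zero hc h

end

/-- For all complex `z, w`, `(1/n) Σ_{k=0}^n ((1 + z/n)(1 + conj w/n))^k` converges, as
`n → ∞`, to `∫₀¹ e^{t(z + conj w)} dt`. -/
theorem kac_covariance_limit (z w : ℂ) :
    Tendsto
      (fun n : ℕ =>
        (1 / (n : ℂ)) *
          ∑ k ∈ Finset.range (n + 1),
            ((1 + z / (n : ℂ)) * (1 + (starRingEnd ℂ) w / (n : ℂ))) ^ k)
      atTop
      (nhds (∫ t in (0:ℝ)..1, Complex.exp ((t : ℂ) * (z + (starRingEnd ℂ) w)))) := by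
  apply tendsto_one_div_mul_geom_sum
  have hlim : Tendsto (fun n : ℕ => z + starRingEnd ℂ w + z * starRingEnd ℂ w / n) atTop
      (𝓝 (z + starRingEnd ℂ w)) := by
    simpa using (tendsto_const_div_atTop_nhds_zero_nat (z * starRingEnd ℂ w)).const_add _
  refine hlim.congr' ?_
  filter_upwards [eventually_ne_atTop 0] with n hn
  field_simp
  ring
end

section
/- Let ξ be a non-degenerate real random variable (not almost surely constant) with characteristic function φ_ξ(t) = E[e^{itξ}]. Then there exist constants c₀ > 0 and t₀ > 0, depending only on the law of ξ, such that |φ_ξ(t)|² ≤ exp(−c₀ t²) for all |t| ≤ t₀. -/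
/-!
Symmetrize: with `ξ'` an independent copy of `ξ`, `|φ_ξ(t)|² = E[cos (t (ξ - ξ'))]`. Non-degeneracy
of `ξ` makes `ξ - ξ'` non-zero with positive probability, hence `a⁻¹ ≤ |ξ - ξ'| ≤ a` on a set of
positive probability `ε` for some `a > 0`. For `|t| ≤ π / a`, the bound `cos x ≤ 1 - 2x²/π²` on
`[-π, π]` then gives `E[cos (t (ξ - ξ'))] ≤ 1 - (2 ε / (π a)²) t² ≤ exp (-(2 ε / (π a)²) t²)`.
-/

open MeasureTheory

section

open Complex Set

variable {α : Type*} [MeasurableSpace α] (μ : Measure α)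

lemma sq_norm_integral_exp_mul_I [IsFiniteMeasure μ] {f : α → ℝ} (hf : Measurable f) :
    ‖∫ x, exp (f x * I) ∂μ‖ ^ 2 = ∫ p, Real.cos (f p.1 - f p.2) ∂μ.prod μ := by
  have hint : Integrable (fun p : α × α => exp ((f p.1 - f p.2 : ℝ) * I)) (μ.prod μ) :=
    .of_bound (by fun_prop) 1 (.of_forall fun p => by rw [norm_exp_ofReal_mul_I])
  have hprod : ((‖∫ x, exp (f x * I) ∂μ‖ ^ 2 : ℝ) : ℂ)
      = ∫ p, exp ((f p.1 - f p.2 : ℝ) * I) ∂μ.prod μ := by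
    rw [ofReal_pow, ← mul_conj', ← integral_conj, ← integral_prod_mul]
    congr 1 with p
    rw [← exp_conj, ← exp_add, map_mul, conj_ofReal, conj_I]
    push_cast
    ring_nf
  rw [← ofReal_re (‖_‖ ^ 2), hprod, ← RCLike.re_to_complex, ← integral_re hint]
  simp only [RCLike.re_to_complex, exp_ofReal_mul_I_re]

lemma exists_ae_eq_const_of_ae_prod_eq [SFinite μ] [NeZero μ] {f : α → ℝ}
    (h : ∀ᵐ p ∂μ.prod μ, f p.1 = f p.2) : ∃ c, ∀ᵐ x ∂μ, f x = c := by
  obtain ⟨x, hx⟩ := (Measure.ae_ae_of_ae_prod h).exists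
  exact ⟨f x, hx.mono fun _ h => h.symm⟩

lemma exists_measure_abs_mem_Icc_inv_ne_zero {f : α → ℝ} (h : ¬ ∀ᵐ x ∂μ, f x = 0) :
    ∃ a > 0, μ {x | |f x| ∈ Icc a⁻¹ a} ≠ 0 := by
  have hcover : {x | f x ≠ 0} ⊆ ⋃ n : ℕ, {x | |f x| ∈ Icc ((n : ℝ) + 1)⁻¹ ((n : ℝ) + 1)} := by
    intro x hx
    have hpos : 0 < |f x| := abs_pos.2 hx
    obtain ⟨n, hn⟩ := exists_nat_ge (max |f x| |f x|⁻¹)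
    refine mem_iUnion.2 ⟨n, ?_, by linarith [le_max_left |f x| |f x|⁻¹]⟩
    rw [inv_le_comm₀ (by positivity) hpos]
    linarith [le_max_right |f x| |f x|⁻¹]
  rw [ae_iff] at h
  by_contra! hnull
  exact h (measure_mono_null hcover (measure_iUnion_null fun n => hnull _ (by positivity)))

lemma integral_cos_mul_le [IsProbabilityMeasure μ] {f : α → ℝ} (hf : Measurable f) {a b t : ℝ}
    (ha : 0 ≤ a) (ht : |t| * b ≤ Real.pi) :
    ∫ x, Real.cos (t * f x) ∂μ
      ≤ 1 - 2 / Real.pi ^ 2 * a ^ 2 * μ.real {x | |f x| ∈ Icc a b} * t ^ 2 := by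
  set S := {x | |f x| ∈ Icc a b}
  have hS : MeasurableSet S := measurableSet_Icc.preimage hf.abs
  have hcos : Integrable (fun x => Real.cos (t * f x)) μ :=
    .of_bound (by fun_prop) 1 (.of_forall fun x => by simpa using Real.abs_cos_le_one _)
  have hpt : ∀ x, S.indicator (fun _ => 2 / Real.pi ^ 2 * a ^ 2 * t ^ 2) x
      ≤ 1 - Real.cos (t * f x) := by
    intro x
    by_cases hx : x ∈ S
    · rw [indicator_of_mem hx]
      obtain ⟨hax, hxb⟩ := hx
      have hsq : a ^ 2 * t ^ 2 ≤ (t * f x) ^ 2 := by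
        rw [mul_pow, mul_comm, ← sq_abs (f x)]
        gcongr
      have hle : |t * f x| ≤ Real.pi := by
        rw [abs_mul]
        exact (mul_le_mul_of_nonneg_left hxb (abs_nonneg t)).trans ht
      have hπ : 0 ≤ 2 / Real.pi ^ 2 := by positivity
      linarith [Real.cos_le_one_sub_mul_cos_sq hle, mul_le_mul_of_nonneg_left hsq hπ]
    · rw [indicator_of_notMem hx]
      linarith [Real.cos_le_one (t * f x)]
  calc ∫ x, Real.cos (t * f x) ∂μ = 1 - ∫ x, (1 - Real.cos (t * f x)) ∂μ := by
        rw [integral_sub (integrable_const 1) hcos]; simp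
    _ ≤ 1 - ∫ x, S.indicator (fun _ => 2 / Real.pi ^ 2 * a ^ 2 * t ^ 2) x ∂μ :=
        sub_le_sub_left (integral_mono ((integrable_const _).indicator hS)
          ((integrable_const 1).sub hcos) hpt) 1
    _ = _ := by rw [integral_indicator_const _ hS, smul_eq_mul]; ring

lemma exists_integral_cos_mul_le_exp [IsProbabilityMeasure μ] {f : α → ℝ} (hf : Measurable f)
    (h : ¬ ∀ᵐ x ∂μ, f x = 0) :
    ∃ c > (0 : ℝ), ∃ t₀ > (0 : ℝ), ∀ t : ℝ, |t| ≤ t₀ →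
      ∫ x, Real.cos (t * f x) ∂μ ≤ Real.exp (-c * t ^ 2) := by
  obtain ⟨a, ha, hS⟩ := exists_measure_abs_mem_Icc_inv_ne_zero μ h
  set ε := μ.real {x | |f x| ∈ Icc a⁻¹ a}
  have hε : 0 < ε := ENNReal.toReal_pos hS (measure_ne_top _ _)
  set c := 2 / Real.pi ^ 2 * a⁻¹ ^ 2 * ε
  refine ⟨c, by positivity, Real.pi / a, by positivity, fun t ht => ?_⟩
  have hta : |t| * a ≤ Real.pi := by rwa [le_div_iff₀ ha] at ht
  calc ∫ x, Real.cos (t * f x) ∂μ ≤ 1 - c * t ^ 2 :=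
        integral_cos_mul_le μ hf (inv_nonneg.2 ha.le) hta
    _ ≤ Real.exp (-c * t ^ 2) := by linarith [Real.add_one_le_exp (-c * t ^ 2)]

end

/-- If `ξ` is a non-degenerate real random variable with characteristic function
`φ_ξ(t) = E[e^{itξ}]`, then there exist `c₀ > 0` and `t₀ > 0`, depending only on the law of `ξ`,
such that `|φ_ξ(t)|² ≤ exp(−c₀ t²)` for all `|t| ≤ t₀`. -/
theorem char_fun_gaussian_decay_near_zero
    {Ω : Type*} [MeasurableSpace Ω] (P : Measure Ω) [IsProbabilityMeasure P]
    (ξ : Ω → ℝ) (hmeas : Measurable ξ)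
    (hnd : ¬ ∃ c : ℝ, ∀ᵐ ω ∂P, ξ ω = c) :
    ∃ c₀ > (0:ℝ), ∃ t₀ > (0:ℝ), ∀ t : ℝ, |t| ≤ t₀ →
      (‖∫ ω, Complex.exp ((t : ℂ) * (ξ ω : ℂ) * Complex.I) ∂P‖) ^ 2
        ≤ Real.exp (-c₀ * t ^ 2) := by
  have hsym : ¬ ∀ᵐ p ∂P.prod P, ξ p.1 - ξ p.2 = 0 := fun h =>
    hnd (exists_ae_eq_const_of_ae_prod_eq P (h.mono fun _ => sub_eq_zero.1))
  obtain ⟨c₀, hc₀, t₀, ht₀, hcos⟩ :=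
    exists_integral_cos_mul_le_exp (P.prod P) (by fun_prop) hsym
  refine ⟨c₀, hc₀, t₀, ht₀, fun t ht => ?_⟩
  have hsq := sq_norm_integral_exp_mul_I P (f := fun ω => t * ξ ω) (by fun_prop)
  simp only [← mul_sub, Complex.ofReal_mul] at hsq
  exact hsq ▸ hcos t ht
end

section
/- Let g be a random entire function such that E[max_{|z| ≤ 2R} |g''(z)|] < ∞ for each R, g(w) is a non-degenerate complex Gaussian for each w, and sup_{|w| ≤ 2R} P(|g(w)| ≤ s) = O_R(s²) as s → 0. Then for every R > 0 and ε > 0, with probability at least 1 − ε, g has no zero of multiplicity ≥ 2 in the disk {|z| ≤ R}. -/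
/-!
If `g ω` has a double zero `z₀` with `|z₀| ≤ R` and `|g ω''| ≤ K` on `|z| ≤ 2R`, Taylor's
formula gives `|g ω| ≤ K δ²` on the disk of radius `δ` about `z₀`, so the sublevel set
`{|g ω| ≤ K δ²} ∩ {|z| ≤ 2R}` has area at least `π δ²`. By Fubini and the small-ball bound its
expected area is at most `C (K δ²)² · 4π R²`, so by Markov's inequality such a double zero has
probability `O(K² R² δ²)`. Letting `δ → 0`, and then `K` run through `ℕ`, shows that double zeros
in `|z| ≤ R` occur with probability zero.
-/

open MeasureTheory ProbabilityTheory Complex Metric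
open Filter Topology Set
open scoped ENNReal

theorem norm_le_mul_sq_of_eq_zero_of_deriv_eq_zero {𝕜 E : Type*} [RCLike 𝕜]
    [NormedAddCommGroup E] [NormedSpace 𝕜 E] {f : 𝕜 → E} (hf : ContDiff 𝕜 2 f)
    {z₀ w : 𝕜} {δ K : ℝ} (h0 : f z₀ = 0) (h1 : deriv f z₀ = 0)
    (hK : ∀ u ∈ closedBall z₀ δ, ‖iteratedDeriv 2 f u‖ ≤ K) (hw : w ∈ closedBall z₀ δ) :
    ‖f w‖ ≤ K * δ ^ 2 := by
  have hz₀ : z₀ ∈ closedBall z₀ δ := mem_closedBall_self (dist_nonneg.trans hw)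
  have hK0 : 0 ≤ K := (norm_nonneg _).trans (hK z₀ hz₀)
  have hderiv : ∀ u ∈ closedBall z₀ δ, ‖deriv f u‖ ≤ K * δ := fun u hu => by
    have hmvt := (convex_closedBall z₀ δ).norm_image_sub_le_of_norm_deriv_le
      (fun x _ => hf.differentiable_deriv_two x)
      (fun x hx => by simpa [iteratedDeriv_succ] using hK x hx) hz₀ hu
    rw [h1, sub_zero] at hmvt
    exact hmvt.trans (mul_le_mul_of_nonneg_left (mem_closedBall_iff_norm.1 hu) hK0)
  have hmvt := (convex_closedBall z₀ δ).norm_image_sub_le_of_norm_deriv_le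
    (fun x _ => hf.differentiable two_ne_zero x) hderiv hz₀ hw
  rw [h0, sub_zero] at hmvt
  calc ‖f w‖ ≤ K * δ * δ :=
        hmvt.trans (mul_le_mul_of_nonneg_left (mem_closedBall_iff_norm.1 hw)
          (mul_nonneg hK0 (dist_nonneg.trans hw)))
    _ = K * δ ^ 2 := by ring

theorem closedBall_subset_sublevel_of_double_zero {𝕜 E : Type*} [RCLike 𝕜]
    [NormedAddCommGroup E] [NormedSpace 𝕜 E] {f : 𝕜 → E} (hf : ContDiff 𝕜 2 f)
    {z₀ : 𝕜} {R δ K : ℝ} (hz₀ : z₀ ∈ closedBall 0 R) (hδR : δ ≤ R)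
    (h0 : f z₀ = 0) (h1 : deriv f z₀ = 0)
    (hK : ∀ u ∈ closedBall 0 (2 * R), ‖iteratedDeriv 2 f u‖ ≤ K) :
    closedBall z₀ δ ⊆ closedBall 0 (2 * R) ∩ {w | ‖f w‖ ≤ K * δ ^ 2} := by
  have hsub : closedBall z₀ δ ⊆ closedBall 0 (2 * R) :=
    closedBall_subset_closedBall' (by rw [mem_closedBall] at hz₀; linarith)
  exact fun w hw => ⟨hsub hw,
    norm_le_mul_sq_of_eq_zero_of_deriv_eq_zero hf h0 h1 (fun u hu => hK u (hsub hu)) hw⟩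

theorem mul_measure_le_of_forall_le_measure_section {Ω α : Type*} [MeasurableSpace Ω]
    [MeasurableSpace α] (P : Measure Ω) [SFinite P] (ν : Measure α) [SFinite ν]
    {T : Set (Ω × α)} (hT : MeasurableSet T) {a c : ℝ≥0∞}
    (hc : ∀ᵐ w ∂ν, P ((·, w) ⁻¹' T) ≤ c) {A : Set Ω}
    (hA : ∀ ω ∈ A, a ≤ ν (Prod.mk ω ⁻¹' T)) :
    a * P A ≤ c * ν univ :=
  calc a * P A ≤ a * P {ω | a ≤ ν (Prod.mk ω ⁻¹' T)} := by gcongr; exact hA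
    _ ≤ ∫⁻ ω, ν (Prod.mk ω ⁻¹' T) ∂P :=
        mul_meas_ge_le_lintegral₀ (measurable_measure_prodMk_left hT).aemeasurable a
    _ = ∫⁻ w, P ((·, w) ⁻¹' T) ∂ν := by
        rw [← Measure.prod_apply hT, Measure.prod_apply_symm hT]
    _ ≤ ∫⁻ _, c ∂ν := lintegral_mono_ae hc
    _ = c * ν univ := lintegral_const c

theorem Complex.volume_closedBall_eq_ofReal (a : ℂ) {r : ℝ} (hr : 0 ≤ r) :
    volume (closedBall a r) = ENNReal.ofReal (Real.pi * r ^ 2) := by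
  rw [Complex.volume_closedBall, ← ENNReal.ofReal_pow hr, ← ENNReal.ofReal_coe_nnreal,
    ← ENNReal.ofReal_mul (by positivity), NNReal.coe_real_pi, mul_comm]

theorem exists_differentiable_modification {𝕜 E F Ω : Type*} [NontriviallyNormedField 𝕜]
    [NormedAddCommGroup E] [NormedSpace 𝕜 E] [NormedAddCommGroup F] [NormedSpace 𝕜 F]
    [MeasurableSpace F] [MeasurableSpace Ω] {P : Measure Ω} {g : Ω → E → F}
    (hmeas : ∀ z, Measurable fun ω => g ω z) (hdiff : ∀ᵐ ω ∂P, Differentiable 𝕜 (g ω)) :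
    ∃ g' : Ω → E → F, (∀ ω, Differentiable 𝕜 (g' ω)) ∧
      (∀ z, Measurable fun ω => g' ω z) ∧ g' =ᵐ[P] g := by
  classical
  obtain ⟨N, hNbad, hN, hN0⟩ := exists_measurable_superset_of_null (ae_iff.1 hdiff)
  refine ⟨fun ω z => if ω ∈ N then 0 else g ω z, fun ω => ?_,
    fun z => Measurable.ite hN measurable_const (hmeas z), ?_⟩
  · by_cases hω : ω ∈ N
    · simp [hω]
    · simpa [hω] using not_not.1 (mt (@hNbad ω) hω)
  · filter_upwards [measure_eq_zero_iff_ae_notMem.1 hN0] with ω hω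
    simp [hω]

def HasDoubleZeroIn {𝕜 E : Type*} [NontriviallyNormedField 𝕜] [NormedAddCommGroup E]
    [NormedSpace 𝕜 E] (f : 𝕜 → E) (s : Set 𝕜) : Prop :=
  ∃ z ∈ s, f z = 0 ∧ deriv f z = 0

section DoubleZeros

variable {Ω : Type*} [MeasurableSpace Ω] {P : Measure Ω} [SFinite P] {g : Ω → ℂ → ℂ}

theorem measure_hasDoubleZeroIn_of_iteratedDeriv_le_le
    (hdiff : ∀ ω, Differentiable ℂ (g ω)) (hmeas : ∀ z, Measurable fun ω => g ω z)
    {R C K δ : ℝ} (hδ : 0 < δ) (hδR : δ ≤ R)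
    (hsmall : ∀ w ∈ closedBall (0 : ℂ) (2 * R),
      P {ω | ‖g ω w‖ ≤ K * δ ^ 2} ≤ ENNReal.ofReal (C * (K * δ ^ 2) ^ 2)) :
    P {ω | HasDoubleZeroIn (g ω) (closedBall 0 R) ∧
        ∀ u ∈ closedBall (0 : ℂ) (2 * R), ‖iteratedDeriv 2 (g ω) u‖ ≤ K} ≤
      ENNReal.ofReal (C * (4 * K ^ 2 * R ^ 2 * δ ^ 2)) := by
  have hjoint : Measurable fun p : Ω × ℂ => g p.1 p.2 :=
    (measurable_uncurry_of_continuous_of_measurable (fun ω => (hdiff ω).continuous)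
      hmeas).comp measurable_swap
  have hT : MeasurableSet {p : Ω × ℂ | ‖g p.1 p.2‖ ≤ K * δ ^ 2} :=
    measurableSet_le hjoint.norm measurable_const
  have hB := measurableSet_closedBall (x := (0 : ℂ)) (ε := 2 * R)
  have harea := mul_measure_le_of_forall_le_measure_section P
    (volume.restrict (closedBall (0 : ℂ) (2 * R))) hT
    ((ae_restrict_iff' hB).2 (Eventually.of_forall hsmall))
    (a := volume (closedBall (0 : ℂ) δ))
    (A := {ω | HasDoubleZeroIn (g ω) (closedBall 0 R) ∧
      ∀ u ∈ closedBall (0 : ℂ) (2 * R), ‖iteratedDeriv 2 (g ω) u‖ ≤ K})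
    fun ω ⟨⟨z₀, hz₀, h0, h1⟩, hK⟩ => by
      rw [Measure.restrict_apply' hB, inter_comm]
      simpa using measure_mono (μ := volume)
        (closedBall_subset_sublevel_of_double_zero (hdiff ω).contDiff hz₀ hδR h0 h1 hK)
  have hπδ : 0 < Real.pi * δ ^ 2 := by positivity
  rw [Measure.restrict_apply_univ, Complex.volume_closedBall_eq_ofReal _ hδ.le,
    Complex.volume_closedBall_eq_ofReal _ (by linarith), ← ENNReal.ofReal_mul' (by positivity)]
    at harea
  refine (ENNReal.mul_le_mul_iff_right (ENNReal.ofReal_pos.2 hπδ).ne' ENNReal.ofReal_ne_top).1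
    (harea.trans_eq ?_)
  rw [← ENNReal.ofReal_mul hπδ.le]
  ring_nf

theorem measure_hasDoubleZeroIn_of_iteratedDeriv_le_eq_zero
    (hdiff : ∀ ω, Differentiable ℂ (g ω)) (hmeas : ∀ z, Measurable fun ω => g ω z)
    {R C K : ℝ} (hR : 0 < R) (hK : 0 < K)
    (hsmall : ∀ s : ℝ, 0 < s → s ≤ 1 → ∀ w ∈ closedBall (0 : ℂ) (2 * R),
      P {ω | ‖g ω w‖ ≤ s} ≤ ENNReal.ofReal (C * s ^ 2)) :
    P {ω | HasDoubleZeroIn (g ω) (closedBall 0 R) ∧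
        ∀ u ∈ closedBall (0 : ℂ) (2 * R), ‖iteratedDeriv 2 (g ω) u‖ ≤ K} = 0 := by
  have hbound : Tendsto (fun δ : ℝ => ENNReal.ofReal (C * (4 * K ^ 2 * R ^ 2 * δ ^ 2)))
      (𝓝[>] 0) (𝓝 0) := by
    have : Tendsto (fun δ : ℝ => C * (4 * K ^ 2 * R ^ 2 * δ ^ 2)) (𝓝 0) (𝓝 0) :=
      (by fun_prop : Continuous fun δ : ℝ => C * (4 * K ^ 2 * R ^ 2 * δ ^ 2)).tendsto' 0 0
        (by simp)
    simpa using (ENNReal.tendsto_ofReal this).mono_left nhdsWithin_le_nhds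
  have hs : Tendsto (fun δ : ℝ => K * δ ^ 2) (𝓝 0) (𝓝 0) :=
    (by fun_prop : Continuous fun δ : ℝ => K * δ ^ 2).tendsto' 0 0 (by simp)
  have hsmall_δ : ∀ᶠ δ in 𝓝[>] (0 : ℝ), 0 < δ ∧ δ ≤ R ∧ K * δ ^ 2 < 1 :=
    eventually_mem_nhdsWithin.and <| nhdsWithin_le_nhds <|
      (eventually_le_nhds hR).and (hs.eventually_lt_const one_pos)
  refine nonpos_iff_eq_zero.1 (ge_of_tendsto hbound ?_)
  filter_upwards [hsmall_δ] with δ ⟨hδ, hδR, hs1⟩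
  exact measure_hasDoubleZeroIn_of_iteratedDeriv_le_le hdiff hmeas hδ hδR
    (hsmall _ (by positivity) hs1.le)

theorem measure_hasDoubleZeroIn_eq_zero_of_differentiable
    (hdiff : ∀ ω, Differentiable ℂ (g ω)) (hmeas : ∀ z, Measurable fun ω => g ω z)
    {R C : ℝ} (hR : 0 < R)
    (hsmall : ∀ s : ℝ, 0 < s → s ≤ 1 → ∀ w ∈ closedBall (0 : ℂ) (2 * R),
      P {ω | ‖g ω w‖ ≤ s} ≤ ENNReal.ofReal (C * s ^ 2)) :
    P {ω | HasDoubleZeroIn (g ω) (closedBall 0 R)} = 0 := by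
  refine measure_mono_null (fun ω hω => ?_) (measure_iUnion_null fun k : ℕ =>
    measure_hasDoubleZeroIn_of_iteratedDeriv_le_eq_zero hdiff hmeas hR k.cast_add_one_pos hsmall)
  obtain ⟨M, hM⟩ := (isCompact_closedBall (0 : ℂ) (2 * R)).exists_bound_of_continuousOn
    (((hdiff ω).contDiff (n := 2)).continuous_iteratedDeriv 2 le_rfl).continuousOn
  obtain ⟨k, hk⟩ := exists_nat_gt M
  exact mem_iUnion.2 ⟨k, hω, fun u hu => (hM u hu).trans (by linarith)⟩

theorem ae_not_hasDoubleZeroIn (hmeas : ∀ z, Measurable fun ω => g ω z)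
    (hdiff : ∀ᵐ ω ∂P, Differentiable ℂ (g ω)) {R C : ℝ} (hR : 0 < R)
    (hsmall : ∀ s : ℝ, 0 < s → s ≤ 1 → ∀ w ∈ closedBall (0 : ℂ) (2 * R),
      P {ω | ‖g ω w‖ ≤ s} ≤ ENNReal.ofReal (C * s ^ 2)) :
    ∀ᵐ ω ∂P, ¬HasDoubleZeroIn (g ω) (closedBall 0 R) := by
  obtain ⟨g', hdiff', hmeas', hg'⟩ := exists_differentiable_modification hmeas hdiff
  have hsmall' : ∀ s : ℝ, 0 < s → s ≤ 1 → ∀ w ∈ closedBall (0 : ℂ) (2 * R),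
      P {ω | ‖g' ω w‖ ≤ s} ≤ ENNReal.ofReal (C * s ^ 2) := fun s hs hs1 w hw =>
    (measure_congr (eventuallyEq_set.2 (hg'.mono fun ω h => by simp [h]))).trans_le
      (hsmall s hs hs1 w hw)
  filter_upwards [hg', measure_eq_zero_iff_ae_notMem.1
    (measure_hasDoubleZeroIn_eq_zero_of_differentiable hdiff' hmeas' hR hsmall')] with ω hω hbad
  rwa [← hω]

end DoubleZeros

theorem no_double_zeros_with_high_probability_general
    {Ω : Type*} [MeasurableSpace Ω] (P : Measure Ω) [IsProbabilityMeasure P]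
    (g : Ω → ℂ → ℂ)
    (hmeas : ∀ z, Measurable (fun ω => g ω z))
    (hentire : ∀ᵐ ω ∂P, Differentiable ℂ (g ω))
    -- small ball estimate, uniformly on compacts: `P(|g(w)| ≤ s) = O_R(s²)`
    (hsmall : ∀ R : ℝ, 0 < R → ∃ C : ℝ, 0 < C ∧ ∀ s : ℝ, 0 < s → s ≤ 1 →
      ∀ w ∈ Metric.closedBall (0:ℂ) (2 * R),
        P {ω | ‖g ω w‖ ≤ s} ≤ ENNReal.ofReal (C * s ^ 2)) :
    ∀ R : ℝ, 0 < R → ∀ ε : ℝ, 0 < ε →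
      1 - ENNReal.ofReal ε ≤
        P {ω | ∀ z ∈ Metric.closedBall (0:ℂ) R, ¬(g ω z = 0 ∧ deriv (g ω) z = 0)} := by
  intro R hR ε _
  obtain ⟨C, -, hC⟩ := hsmall R hR
  have hae : ∀ᵐ ω ∂P, ∀ z ∈ closedBall (0 : ℂ) R, ¬(g ω z = 0 ∧ deriv (g ω) z = 0) :=
    (ae_not_hasDoubleZeroIn hmeas hentire hR hC).mono fun ω h z hz hz0 => h ⟨z, hz, hz0⟩
  rw [measure_congr (eventuallyEq_univ.2 hae), measure_univ]
  exact tsub_le_self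

/-- Quantitative simplicity of zeros: if `g` is a random entire function with
`E[max_{|z| ≤ 2R} |g''(z)|] < ∞` for every `R`, `g(w)` is a non-degenerate complex Gaussian
for each `w`, and `sup_{|w| ≤ 2R} P(|g(w)| ≤ s) = O_R(s²)` as `s → 0`, then for every `R > 0`
and `ε > 0`, with probability at least `1 − ε` the function `g` has no zero of
multiplicity `≥ 2` in `{|z| ≤ R}`. -/
theorem no_double_zeros_with_high_probability
    {Ω : Type*} [MeasurableSpace Ω] (P : Measure Ω) [IsProbabilityMeasure P]
    (g : Ω → ℂ → ℂ)
    (hmeas : ∀ z, Measurable (fun ω => g ω z))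
    (hentire : ∀ᵐ ω ∂P, Differentiable ℂ (g ω))
    (hsecond : ∀ R : ℝ, 0 < R →
      Integrable (fun ω => ⨆ z ∈ Metric.closedBall (0:ℂ) (2 * R), ‖iteratedDeriv 2 (g ω) z‖) P)
    -- `g(w)` is a non-degenerate complex Gaussian for each `w`
    (hgauss : ∀ w : ℂ, ∃ v : NNReal, 0 < v ∧
      P.map (fun ω => (g ω w).re) = gaussianReal 0 v ∧
      P.map (fun ω => (g ω w).im) = gaussianReal 0 v)
    -- small ball estimate, uniformly on compacts: `P(|g(w)| ≤ s) = O_R(s²)`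
    (hsmall : ∀ R : ℝ, 0 < R → ∃ C : ℝ, 0 < C ∧ ∀ s : ℝ, 0 < s → s ≤ 1 →
      ∀ w ∈ Metric.closedBall (0:ℂ) (2 * R),
        P {ω | ‖g ω w‖ ≤ s} ≤ ENNReal.ofReal (C * s ^ 2)) :
    ∀ R : ℝ, 0 < R → ∀ ε : ℝ, 0 < ε →
      1 - ENNReal.ofReal ε ≤
        P {ω | ∀ z ∈ Metric.closedBall (0:ℂ) R, ¬(g ω z = 0 ∧ deriv (g ω) z = 0)} :=
  no_double_zeros_with_high_probability_general P g hmeas hentire hsmall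
end
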